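/- Let a¹, a², a³: ℤ → ℂ be sequences in h^ν ∩ h¹ for ν ≥ 0, and define R_p = Σ_{(p,q,r,s)∈Γ₀} a¹_q · conj(a²_r) · a³_s. Then ‖R‖_{h^ν} ≲ Σ over permutations σ of {1,2,3} of ‖a^{σ(1)}‖_{h^ν} · ‖a^{σ(2)}‖_{h¹} · ‖a^{σ(3)}‖_{h¹}. -/

import Mathlib

open scoped ComplexConjugate

/-- The reduced resonant nonlinearity over `Γ₀ = {(p,q,r,s) : {p,r} = {q,s}}`. -/
noncomputable def Rop (f g h : ℤ → ℂ) (p : ℤ) : ℂ :=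
  ∑' x : {x : ℤ × ℤ × ℤ // ({p, x.2.1} : Set ℤ) = {x.1, x.2.2}},
    f x.val.1 * conj (g x.val.2.1) * h x.val.2.2

/-- The `h^ν` norm of a sequence. -/
noncomputable def hnorm (ν : ℝ) (a : ℤ → ℂ) : ℝ :=
  Real.sqrt (∑' p : ℤ, (1 + (p : ℝ) ^ 2) ^ ν * ‖a p‖ ^ 2)

/-!
Over a fixed `p`, the resonant set `Γ₀` consists of the points `(p, r, r)` and, for `r ≠ p`,
`(r, r, p)`. Hence `R_p = a¹_p ⟨a³, a²⟩ + (∑_{r ≠ p} a¹_r conj a²_r) a³_p`: the whole weight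
`⟨p⟩^ν` falls on `a¹_p` or on `a³_p`, and the two coefficients are bounded, by Cauchy–Schwarz,
by `‖a²‖_{h¹} ‖a³‖_{h¹}` and `‖a¹‖_{h¹} ‖a²‖_{h¹}`. The triangle inequality in weighted `ℓ²`
then gives the estimate with `C = 1`.
-/

namespace Real

variable {ι : Type*} {f g h : ι → ℝ}

theorem summable_mul_and_tsum_mul_le_sqrt_mul_sqrt (hf : ∀ i, 0 ≤ f i) (hg : ∀ i, 0 ≤ g i)
    (hf2 : Summable fun i => f i ^ 2) (hg2 : Summable fun i => g i ^ 2) :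
    (Summable fun i => f i * g i) ∧
      ∑' i, f i * g i ≤ √(∑' i, f i ^ 2) * √(∑' i, g i ^ 2) := by
  simp only [← rpow_two] at hf2 hg2
  simpa only [rpow_two, sqrt_eq_rpow] using
    summable_and_inner_le_Lp_mul_Lq_tsum_of_nonneg HolderConjugate.two_two hf hg hf2 hg2

theorem summable_add_sq_and_sqrt_tsum_add_sq_le (hf : ∀ i, 0 ≤ f i) (hg : ∀ i, 0 ≤ g i)
    (hf2 : Summable fun i => f i ^ 2) (hg2 : Summable fun i => g i ^ 2) :
    (Summable fun i => (f i + g i) ^ 2) ∧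
      √(∑' i, (f i + g i) ^ 2) ≤ √(∑' i, f i ^ 2) + √(∑' i, g i ^ 2) := by
  simp only [← rpow_two] at hf2 hg2
  simpa only [rpow_two, sqrt_eq_rpow] using Lp_add_le_tsum_of_nonneg one_le_two hf hg hf2 hg2

theorem sqrt_tsum_mul_sq (c : ℝ) (hc : 0 ≤ c) (g : ι → ℝ) :
    √(∑' i, (c * g i) ^ 2) = c * √(∑' i, g i ^ 2) := by
  simp only [mul_pow, tsum_mul_left, sqrt_mul (sq_nonneg c), sqrt_sq hc]

theorem sqrt_tsum_sq_le_of_le {c d : ℝ} (hc : 0 ≤ c) (hd : 0 ≤ d) (hf : ∀ i, 0 ≤ f i)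
    (hg : ∀ i, 0 ≤ g i) (hh : ∀ i, 0 ≤ h i) (hg2 : Summable fun i => g i ^ 2)
    (hh2 : Summable fun i => h i ^ 2) (hfgh : ∀ i, f i ≤ c * g i + d * h i) :
    √(∑' i, f i ^ 2) ≤ c * √(∑' i, g i ^ 2) + d * √(∑' i, h i ^ 2) := by
  obtain ⟨hsum, hle⟩ := summable_add_sq_and_sqrt_tsum_add_sq_le
    (fun i => mul_nonneg hc (hg i)) (fun i => mul_nonneg hd (hh i))
    (by simpa only [mul_pow] using hg2.mul_left (c ^ 2))
    (by simpa only [mul_pow] using hh2.mul_left (d ^ 2))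
  have hsq : ∀ i, f i ^ 2 ≤ (c * g i + d * h i) ^ 2 := fun i => pow_le_pow_left₀ (hf i) (hfgh i) 2
  calc √(∑' i, f i ^ 2)
      ≤ √(∑' i, (c * g i + d * h i) ^ 2) :=
        sqrt_le_sqrt <| (hsum.of_nonneg_of_le (fun i => sq_nonneg _) hsq).tsum_le_tsum hsq hsum
    _ ≤ c * √(∑' i, g i ^ 2) + d * √(∑' i, h i ^ 2) := by
        rwa [sqrt_tsum_mul_sq c hc, sqrt_tsum_mul_sq d hd] at hle

end Real

section hnorm

variable {μ ν : ℝ} {a b : ℤ → ℂ}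

theorem hnorm_nonneg (ν : ℝ) (a : ℤ → ℂ) : 0 ≤ hnorm ν a := Real.sqrt_nonneg _

theorem hnorm_zero_eq (a : ℤ → ℂ) : hnorm 0 a = √(∑' p, ‖a p‖ ^ 2) := by
  simp only [hnorm, Real.rpow_zero, one_mul]

theorem hnorm_eq_sqrt_tsum_sq (ν : ℝ) (a : ℤ → ℂ) :
    hnorm ν a = √(∑' p : ℤ, (√((1 + (p : ℝ) ^ 2) ^ ν) * ‖a p‖) ^ 2) := by
  unfold hnorm
  congr 1
  exact tsum_congr fun p => by rw [mul_pow, Real.sq_sqrt (by positivity)]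

theorem one_add_sq_rpow_le_rpow (p : ℤ) (hμν : μ ≤ ν) :
    (1 + (p : ℝ) ^ 2) ^ μ ≤ (1 + (p : ℝ) ^ 2) ^ ν :=
  Real.rpow_le_rpow_of_exponent_le (le_add_of_nonneg_right (sq_nonneg _)) hμν

theorem summable_weight_of_le (hμν : μ ≤ ν)
    (ha : Summable fun p : ℤ => (1 + (p : ℝ) ^ 2) ^ ν * ‖a p‖ ^ 2) :
    Summable fun p : ℤ => (1 + (p : ℝ) ^ 2) ^ μ * ‖a p‖ ^ 2 :=
  ha.of_nonneg_of_le (fun p => by positivity) fun p =>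
    mul_le_mul_of_nonneg_right (one_add_sq_rpow_le_rpow p hμν) (sq_nonneg _)

theorem hnorm_le_hnorm (hμν : μ ≤ ν)
    (ha : Summable fun p : ℤ => (1 + (p : ℝ) ^ 2) ^ ν * ‖a p‖ ^ 2) : hnorm μ a ≤ hnorm ν a :=
  Real.sqrt_le_sqrt <| (summable_weight_of_le hμν ha).tsum_le_tsum
    (fun p => mul_le_mul_of_nonneg_right (one_add_sq_rpow_le_rpow p hμν) (sq_nonneg _)) ha

theorem summable_norm_mul_norm_and_tsum_le_hnorm_one
    (ha : Summable fun p : ℤ => (1 + (p : ℝ) ^ 2) * ‖a p‖ ^ 2)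
    (hb : Summable fun p : ℤ => (1 + (p : ℝ) ^ 2) * ‖b p‖ ^ 2) :
    (Summable fun p => ‖a p‖ * ‖b p‖) ∧ ∑' p, ‖a p‖ * ‖b p‖ ≤ hnorm 1 a * hnorm 1 b := by
  replace ha : Summable fun p : ℤ => (1 + (p : ℝ) ^ 2) ^ (1 : ℝ) * ‖a p‖ ^ 2 := by
    simpa only [Real.rpow_one] using ha
  replace hb : Summable fun p : ℤ => (1 + (p : ℝ) ^ 2) ^ (1 : ℝ) * ‖b p‖ ^ 2 := by
    simpa only [Real.rpow_one] using hb
  have ha0 := summable_weight_of_le zero_le_one ha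
  have hb0 := summable_weight_of_le zero_le_one hb
  simp only [Real.rpow_zero, one_mul] at ha0 hb0
  obtain ⟨hsum, hle⟩ := Real.summable_mul_and_tsum_mul_le_sqrt_mul_sqrt
    (fun p => norm_nonneg (a p)) (fun p => norm_nonneg (b p)) ha0 hb0
  refine ⟨hsum, hle.trans ?_⟩
  rw [← hnorm_zero_eq, ← hnorm_zero_eq]
  exact mul_le_mul (hnorm_le_hnorm zero_le_one ha) (hnorm_le_hnorm zero_le_one hb)
    (hnorm_nonneg _ _) (hnorm_nonneg _ _)

theorem hnorm_le_of_norm_le {f g h : ℤ → ℂ} {c d : ℝ} (hc : 0 ≤ c) (hd : 0 ≤ d)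
    (hg : Summable fun p : ℤ => (1 + (p : ℝ) ^ 2) ^ ν * ‖g p‖ ^ 2)
    (hh : Summable fun p : ℤ => (1 + (p : ℝ) ^ 2) ^ ν * ‖h p‖ ^ 2)
    (hfgh : ∀ p, ‖f p‖ ≤ c * ‖g p‖ + d * ‖h p‖) :
    hnorm ν f ≤ c * hnorm ν g + d * hnorm ν h := by
  simp only [hnorm_eq_sqrt_tsum_sq]
  have hw : ∀ p : ℤ, (√((1 + (p : ℝ) ^ 2) ^ ν)) ^ 2 = (1 + (p : ℝ) ^ 2) ^ ν :=
    fun p => Real.sq_sqrt (by positivity)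
  refine Real.sqrt_tsum_sq_le_of_le hc hd (fun p => by positivity) (fun p => by positivity)
    (fun p => by positivity) (by simpa only [mul_pow, hw] using hg)
    (by simpa only [mul_pow, hw] using hh) fun p => ?_
  calc √((1 + (p : ℝ) ^ 2) ^ ν) * ‖f p‖
      ≤ √((1 + (p : ℝ) ^ 2) ^ ν) * (c * ‖g p‖ + d * ‖h p‖) := by gcongr; exact hfgh p
    _ = c * (√((1 + (p : ℝ) ^ 2) ^ ν) * ‖g p‖) + d * (√((1 + (p : ℝ) ^ 2) ^ ν) * ‖h p‖) := by
        ring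

end hnorm

section Rop

open Set

theorem resonant_slice_eq (p : ℤ) :
    {x : ℤ × ℤ × ℤ | ({p, x.2.1} : Set ℤ) = {x.1, x.2.2}} =
      range (fun r : ℤ => (p, r, r)) ∪ (fun r : ℤ => (r, r, p)) '' {p}ᶜ := by
  ext ⟨q, r, s⟩
  simp only [mem_ofPred_eq, pair_eq_pair_iff, mem_union, mem_range, mem_image,
    mem_compl_singleton_iff, Prod.mk.injEq]
  constructor
  · rintro (⟨hq, hrs⟩ | ⟨hs, hrq⟩)
    · exact Or.inl ⟨r, hq, rfl, hrs⟩
    · by_cases hrp : r = p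
      · exact Or.inl ⟨r, hrp.symm.trans hrq, rfl, hrp.trans hs⟩
      · exact Or.inr ⟨r, hrp, hrq, rfl, hs⟩
  · rintro (⟨r, hq, rfl, rfl⟩ | ⟨r, -, hq, rfl, hs⟩)
    · exact Or.inl ⟨hq, rfl⟩
    · exact Or.inr ⟨hs, hq⟩

theorem Rop_eq {a1 a2 a3 : ℤ → ℂ} (h12 : Summable fun r => a1 r * conj (a2 r))
    (h23 : Summable fun r => conj (a2 r) * a3 r) (p : ℤ) :
    Rop a1 a2 a3 p = a1 p * ∑' r, conj (a2 r) * a3 r +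
      (∑' r : ({p}ᶜ : Set ℤ), a1 r * conj (a2 r)) * a3 p := by
  set F : ℤ × ℤ × ℤ → ℂ := fun x => a1 x.1 * conj (a2 x.2.1) * a3 x.2.2
  have hinj1 : Function.Injective fun r : ℤ => (p, r, r) := fun r s h => congrArg (·.2.1) h
  have hinj2 : InjOn (fun r : ℤ => (r, r, p)) {p}ᶜ := fun r _ s _ h => congrArg Prod.fst h
  have hdisj : Disjoint (range fun r : ℤ => (p, r, r)) ((fun r : ℤ => (r, r, p)) '' {p}ᶜ) := by
    rw [disjoint_left]
    rintro _ ⟨r, rfl⟩ ⟨s, hs, h⟩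
    exact hs (congrArg Prod.fst h)
  have hsum1 : Summable (F ∘ (↑) : range (fun r : ℤ => (p, r, r)) → ℂ) :=
    (Equiv.ofInjective _ hinj1).summable_iff.mp
      (by simpa only [F, mul_assoc] using h23.mul_left (a1 p) : Summable fun r => F (p, r, r))
  have hsum2 : Summable (F ∘ (↑) : (fun r : ℤ => (r, r, p)) '' {p}ᶜ → ℂ) :=
    (Equiv.Set.imageOfInjOn _ _ hinj2).summable_iff.mp
      ((h12.subtype _).mul_right (a3 p) : Summable fun r : ({p}ᶜ : Set ℤ) => F (r, r, p))
  change ∑' x : {x : ℤ × ℤ × ℤ | ({p, x.2.1} : Set ℤ) = {x.1, x.2.2}}, F x = _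
  rw [tsum_congr_set_coe F (resonant_slice_eq p), hsum1.tsum_union_disjoint hdisj hsum2,
    tsum_range F hinj1, tsum_image F hinj2, ← tsum_mul_left, ← tsum_mul_right]
  simp only [F, mul_assoc]

theorem norm_Rop_le {a1 a2 a3 : ℤ → ℂ} (h12 : Summable fun r => ‖a1 r‖ * ‖a2 r‖)
    (h23 : Summable fun r => ‖a2 r‖ * ‖a3 r‖) (p : ℤ) :
    ‖Rop a1 a2 a3 p‖ ≤
      (∑' r, ‖a2 r‖ * ‖a3 r‖) * ‖a1 p‖ + (∑' r, ‖a1 r‖ * ‖a2 r‖) * ‖a3 p‖ := by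
  have h12' : Summable fun r => ‖a1 r * conj (a2 r)‖ := by
    simpa only [norm_mul, Complex.norm_conj] using h12
  have h23' : Summable fun r => ‖conj (a2 r) * a3 r‖ := by
    simpa only [norm_mul, Complex.norm_conj, mul_comm] using h23
  rw [Rop_eq h12'.of_norm h23'.of_norm p]
  calc _ ≤ ‖a1 p‖ * ‖∑' r, conj (a2 r) * a3 r‖ +
        ‖∑' r : ({p}ᶜ : Set ℤ), a1 r * conj (a2 r)‖ * ‖a3 p‖ := by
        rw [← norm_mul, ← norm_mul]
        exact norm_add_le _ _
    _ ≤ ‖a1 p‖ * ∑' r, ‖conj (a2 r) * a3 r‖ +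
        (∑' r : ({p}ᶜ : Set ℤ), ‖a1 r * conj (a2 r)‖) * ‖a3 p‖ := by
        gcongr
        · exact norm_tsum_le_tsum_norm h23'
        · exact norm_tsum_le_tsum_norm (h12'.subtype _)
    _ ≤ ‖a1 p‖ * ∑' r, ‖conj (a2 r) * a3 r‖ + (∑' r, ‖a1 r * conj (a2 r)‖) * ‖a3 p‖ := by
        gcongr
        exact h12'.tsum_subtype_le _ _ fun r => norm_nonneg _
    _ = _ := by simp only [norm_mul, Complex.norm_conj, mul_comm]

end Rop

theorem stmt_4_general (ν : ℝ) :
    ∃ C > 0, ∀ a1 a2 a3 : ℤ → ℂ,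
      Summable (fun p : ℤ => (1 + (p : ℝ) ^ 2) ^ ν * ‖a1 p‖ ^ 2) →
      Summable (fun p : ℤ => (1 + (p : ℝ) ^ 2) ^ ν * ‖a2 p‖ ^ 2) →
      Summable (fun p : ℤ => (1 + (p : ℝ) ^ 2) ^ ν * ‖a3 p‖ ^ 2) →
      Summable (fun p : ℤ => (1 + (p : ℝ) ^ 2) * ‖a1 p‖ ^ 2) →
      Summable (fun p : ℤ => (1 + (p : ℝ) ^ 2) * ‖a2 p‖ ^ 2) →
      Summable (fun p : ℤ => (1 + (p : ℝ) ^ 2) * ‖a3 p‖ ^ 2) →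
      hnorm ν (Rop a1 a2 a3) ≤
        C * (hnorm ν a1 * hnorm 1 a2 * hnorm 1 a3 +
             hnorm ν a2 * hnorm 1 a1 * hnorm 1 a3 +
             hnorm ν a3 * hnorm 1 a1 * hnorm 1 a2) := by
  refine ⟨1, one_pos, fun a1 a2 a3 hν1 _ hν3 h1 h2 h3 => ?_⟩
  obtain ⟨hs12, hle12⟩ := summable_norm_mul_norm_and_tsum_le_hnorm_one h1 h2
  obtain ⟨hs23, hle23⟩ := summable_norm_mul_norm_and_tsum_le_hnorm_one h2 h3
  have hmiddle : 0 ≤ hnorm ν a2 * hnorm 1 a1 * hnorm 1 a3 :=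
    mul_nonneg (mul_nonneg (hnorm_nonneg ν a2) (hnorm_nonneg 1 a1)) (hnorm_nonneg 1 a3)
  calc hnorm ν (Rop a1 a2 a3)
      ≤ (∑' r, ‖a2 r‖ * ‖a3 r‖) * hnorm ν a1 + (∑' r, ‖a1 r‖ * ‖a2 r‖) * hnorm ν a3 :=
        hnorm_le_of_norm_le (tsum_nonneg fun r => by positivity)
          (tsum_nonneg fun r => by positivity) hν1 hν3 (norm_Rop_le hs12 hs23)
    _ ≤ hnorm 1 a2 * hnorm 1 a3 * hnorm ν a1 + hnorm 1 a1 * hnorm 1 a2 * hnorm ν a3 := by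
        gcongr <;> exact hnorm_nonneg _ _
    _ ≤ _ := by linarith

theorem stmt_4 (ν : ℝ) (hν : 0 ≤ ν) :
    ∃ C > 0, ∀ a1 a2 a3 : ℤ → ℂ,
      Summable (fun p : ℤ => (1 + (p : ℝ) ^ 2) ^ ν * ‖a1 p‖ ^ 2) →
      Summable (fun p : ℤ => (1 + (p : ℝ) ^ 2) ^ ν * ‖a2 p‖ ^ 2) →
      Summable (fun p : ℤ => (1 + (p : ℝ) ^ 2) ^ ν * ‖a3 p‖ ^ 2) →
      Summable (fun p : ℤ => (1 + (p : ℝ) ^ 2) * ‖a1 p‖ ^ 2) →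
      Summable (fun p : ℤ => (1 + (p : ℝ) ^ 2) * ‖a2 p‖ ^ 2) →
      Summable (fun p : ℤ => (1 + (p : ℝ) ^ 2) * ‖a3 p‖ ^ 2) →
      hnorm ν (Rop a1 a2 a3) ≤
        C * (hnorm ν a1 * hnorm 1 a2 * hnorm 1 a3 +
             hnorm ν a2 * hnorm 1 a1 * hnorm 1 a3 +
             hnorm ν a3 * hnorm 1 a1 * hnorm 1 a2) :=
  stmt_4_general ν
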